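/- Let a ∈ ℝ and 0 ≤ R ≤ 1 with α := a + R > 0, and let K_{a,R} = h + conj(g) be the generalized harmonic Koebe function. Then for every r ∈ [0, 1), |h'(r)| + |g'(r)| = (1+r)^{α−1}/(1−r)^{α+1}; that is, K_{a,R} attains equality in the distortion upper bound for affine and linear invariant families of order α along the positive real axis. -/

import Mathlib

open Complex Set

noncomputable section

/-- The open unit disk in the complex plane. -/
def unitDisk : Set ℂ := {z : ℂ | ‖z‖ < 1}

/-- The generalized Koebe function `k_a`, using the principal branch of the logarithm
(via the complex power function). -/
def koebeFn (a : ℂ) (z : ℂ) : ℂ :=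
  if a = 0 then (1 / 2) * Complex.log ((1 + z) / (1 - z))
  else (1 / (2 * a)) * (((1 + z) / (1 - z)) ^ a - 1)

/-- The lens map `l_R` (with principal-branch powers); note that this formula also
gives `l_0 ≡ 0` and `l_1 = id` on the unit disk. -/
def lensMap (R : ℝ) (z : ℂ) : ℂ :=
  (((1 + z) / (1 - z)) ^ (R : ℂ) - 1) / (((1 + z) / (1 - z)) ^ (R : ℂ) + 1)

/-- The `n`-th Taylor coefficient of `f` at `0`. -/
def coeffAt (f : ℂ → ℂ) (n : ℕ) : ℂ := iteratedDeriv n f 0 / n.factorial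

/-! On the real axis the Cayley map `w = (1+r)/(1-r)` is a positive real `s`, so
`k_a'(r) = s^(a-1)/(1-r)^2` and `l_R(r) = (t-1)/(t+1)` with `t = s^R ≥ 1` are real and
nonnegative. Solving `h' - g' = k_a'`, `g' = l_R h'` gives `h' = k_a'(t+1)/2` and
`g' = k_a'(t-1)/2`, both nonnegative reals, so `|h'| + |g'| = k_a' · t = s^(a+R-1)/(1-r)^2`. -/

lemma isOpen_unitDisk : IsOpen unitDisk :=
  isOpen_lt continuous_norm continuous_const

lemma ofReal_mem_unitDisk {r : ℝ} (hr : r ∈ Ioo (-1) 1) : (r : ℂ) ∈ unitDisk := by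
  simpa [unitDisk, abs_lt] using hr

lemma deriv_sub_deriv_eq_of_sub_eq {𝕜 F : Type*} [NontriviallyNormedField 𝕜]
    [NormedAddCommGroup F] [NormedSpace 𝕜 F] {U : Set 𝕜} {z : 𝕜} {h g k : 𝕜 → F} {k' : F}
    (hU : IsOpen U) (hz : z ∈ U) (hh : DifferentiableOn 𝕜 h U) (hg : DifferentiableOn 𝕜 g U)
    (hsub : ∀ w ∈ U, h w - g w = k w) (hk : HasDerivAt k k' z) :
    deriv h z - deriv g z = k' := by
  have hU' : U ∈ nhds z := hU.mem_nhds hz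
  have hk' : HasDerivAt (fun w => h w - g w) k' z :=
    hk.congr_of_eventuallyEq (Filter.eventuallyEq_of_mem hU' hsub)
  exact ((hh.differentiableAt hU').hasDerivAt.sub (hg.differentiableAt hU').hasDerivAt).unique hk'

lemma hasDerivAt_one_add_div_one_sub {z : ℂ} (hz : 1 - z ≠ 0) :
    HasDerivAt (fun w : ℂ => (1 + w) / (1 - w)) (2 / (1 - z) ^ 2) z := by
  have := ((hasDerivAt_id z).const_add 1).div ((hasDerivAt_id z).const_sub 1) hz
  refine this.congr_deriv ?_
  simp only [id]
  field_simp
  ring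

lemma hasDerivAt_koebeFn (a : ℂ) {z : ℂ} (hz : 1 - z ≠ 0)
    (hslit : (1 + z) / (1 - z) ∈ slitPlane) :
    HasDerivAt (koebeFn a) (((1 + z) / (1 - z)) ^ (a - 1) / (1 - z) ^ 2) z := by
  have hW := hasDerivAt_one_add_div_one_sub hz
  have hW0 : (1 + z) / (1 - z) ≠ 0 := slitPlane_ne_zero hslit
  by_cases ha : a = 0
  · subst ha
    have hfn : koebeFn 0 = fun w => 1 / 2 * Complex.log ((1 + w) / (1 - w)) := by
      funext w; simp [koebeFn]
    rw [hfn, zero_sub, cpow_neg_one]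
    refine ((hW.clog hslit).const_mul (1 / 2)).congr_deriv ?_
    field_simp
  · have hfn : koebeFn a = fun w => 1 / (2 * a) * (((1 + w) / (1 - w)) ^ a - 1) := by
      funext w; simp [koebeFn, ha]
    rw [hfn]
    refine (((hW.cpow_const (c := a) hslit).sub_const 1).const_mul (1 / (2 * a))).congr_deriv ?_
    field_simp

lemma one_add_div_one_sub_ofReal (r : ℝ) :
    (1 + (r : ℂ)) / (1 - r) = (((1 + r) / (1 - r) : ℝ) : ℂ) := by
  push_cast; ring

lemma hasDerivAt_koebeFn_ofReal (a : ℝ) {r : ℝ} (hr : r ∈ Ioo (-1) 1) :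
    HasDerivAt (koebeFn a) ((((1 + r) / (1 - r)) ^ (a - 1) / (1 - r) ^ 2 : ℝ) : ℂ) r := by
  have hs : 0 < (1 + r) / (1 - r) := div_pos (by linarith [hr.1]) (by linarith [hr.2])
  have hz : (1 : ℂ) - r ≠ 0 := by exact_mod_cast (sub_pos.2 hr.2).ne'
  have hslit : (1 + (r : ℂ)) / (1 - r) ∈ slitPlane := by
    rw [one_add_div_one_sub_ofReal]; exact ofReal_mem_slitPlane.2 hs
  convert hasDerivAt_koebeFn a hz hslit using 1
  rw [one_add_div_one_sub_ofReal]
  push_cast [ofReal_cpow hs.le]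
  rfl

lemma lensMap_ofReal (R : ℝ) {r : ℝ} (hr : r ∈ Ioo (-1) 1) :
    lensMap R r = (((((1 + r) / (1 - r)) ^ R - 1) / (((1 + r) / (1 - r)) ^ R + 1) : ℝ) : ℂ) := by
  have hs : 0 ≤ (1 + r) / (1 - r) := div_nonneg (by linarith [hr.1]) (by linarith [hr.2])
  rw [lensMap, one_add_div_one_sub_ofReal, ← ofReal_cpow hs]
  push_cast
  rfl

lemma norm_add_norm_eq_of_sub_eq_of_eq_mul {h' g' : ℂ} {c t : ℝ} (hc : 0 ≤ c) (ht : 1 ≤ t)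
    (hsub : h' - g' = c) (hdil : g' = (((t - 1) / (t + 1) : ℝ) : ℂ) * h') :
    ‖h'‖ + ‖g'‖ = c * t := by
  have ht1 : (t : ℂ) + 1 ≠ 0 := by exact_mod_cast (by linarith : t + 1 ≠ 0)
  have hh' : h' = ((c * (t + 1) / 2 : ℝ) : ℂ) := by
    rw [hdil] at hsub
    push_cast at hsub ⊢
    field_simp at hsub
    linear_combination hsub / 2
  have hg' : g' = ((c * (t - 1) / 2 : ℝ) : ℂ) := by
    rw [hdil, hh']
    push_cast
    field_simp
  rw [hh', hg', norm_real, norm_real, Real.norm_of_nonneg (by positivity),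
    Real.norm_of_nonneg (by nlinarith)]
  ring

lemma div_rpow_sub_one_div_sq_mul_div_rpow {x y : ℝ} (hx : 0 < x) (hy : 0 < y) (a R : ℝ) :
    (x / y) ^ (a - 1) / y ^ 2 * (x / y) ^ R = x ^ (a + R - 1) / y ^ (a + R + 1) := by
  have hsq : y ^ (a + R - 1) * y ^ 2 = y ^ (a + R + 1) := by
    rw [← Real.rpow_natCast y 2, ← Real.rpow_add hy]
    norm_num
    ring_nf
  rw [div_mul_eq_mul_div, ← Real.rpow_add (div_pos hx hy), Real.div_rpow hx.le hy.le, div_div,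
    show a - 1 + R = a + R - 1 by ring, hsq]

theorem generalized_harmonic_koebe_distortion_upper_equality_general
    (a R : ℝ) (hR0 : 0 ≤ R)
    (h g : ℂ → ℂ)
    (hh : DifferentiableOn ℂ h unitDisk) (hg : DifferentiableOn ℂ g unitDisk)
    (hshear : ∀ z ∈ unitDisk, h z - g z = koebeFn (a : ℂ) z)
    (hdil : ∀ z ∈ unitDisk, deriv g z = lensMap R z * deriv h z) :
    ∀ r : ℝ, 0 ≤ r → r < 1 →
      ‖deriv h (r : ℂ)‖ + ‖deriv g (r : ℂ)‖
        = (1 + r) ^ (a + R - 1) / (1 - r) ^ (a + R + 1) := by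
  intro r hr0 hr1
  have hr : r ∈ Ioo (-1) 1 := ⟨by linarith, hr1⟩
  have hs1 : 1 ≤ (1 + r) / (1 - r) := (one_le_div (by linarith)).2 (by linarith)
  have hsub := deriv_sub_deriv_eq_of_sub_eq isOpen_unitDisk (ofReal_mem_unitDisk hr) hh hg
    hshear (hasDerivAt_koebeFn_ofReal a hr)
  have hdil_r := hdil r (ofReal_mem_unitDisk hr)
  rw [lensMap_ofReal R hr] at hdil_r
  rw [norm_add_norm_eq_of_sub_eq_of_eq_mul (by positivity) (Real.one_le_rpow hs1 hR0) hsub hdil_r]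
  exact div_rpow_sub_one_div_sq_mul_div_rpow (by linarith) (by linarith) a R

/-- For real `a` and `0 ≤ R ≤ 1` with `α := a + R > 0`, the generalized harmonic Koebe
function `K_{a,R} = h + conj g` (defined by `h - g = k_a`, `g' = l_R·h'`,
`h(0) = g(0) = 0`) attains equality in the distortion upper bound along the positive
real axis: `|h'(r)| + |g'(r)| = (1+r)^(α-1)/(1-r)^(α+1)` for `0 ≤ r < 1`. -/
theorem generalized_harmonic_koebe_distortion_upper_equality
    (a R : ℝ) (hR0 : 0 ≤ R) (hR1 : R ≤ 1) (hα : 0 < a + R)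
    (h g : ℂ → ℂ)
    (hh : DifferentiableOn ℂ h unitDisk) (hg : DifferentiableOn ℂ g unitDisk)
    (h0 : h 0 = 0) (g0 : g 0 = 0)
    (hshear : ∀ z ∈ unitDisk, h z - g z = koebeFn (a : ℂ) z)
    (hdil : ∀ z ∈ unitDisk, deriv g z = lensMap R z * deriv h z) :
    ∀ r : ℝ, 0 ≤ r → r < 1 →
      ‖deriv h (r : ℂ)‖ + ‖deriv g (r : ℂ)‖
        = (1 + r) ^ (a + R - 1) / (1 - r) ^ (a + R + 1) :=
  generalized_harmonic_koebe_distortion_upper_equality_general a R hR0 h g hh hg hshear hdil
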